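/- For integers n >= k >= 1, let t_{n,k} be the tree with root a whose children are the trees t_u = b_u((c_{i_1} c_{i_2} ... c_{i_k})^n) for each injective tuple u = (i_1,...,i_k) in [n]^{falling k}. Then |t_{n,k}| = 1 + n^{falling k} + k*n*n^{falling k}, where n^{falling k} = n(n-1)...(n-k+1), and the degree entropy satisfies H^deg(t_{n,k}) <= C * n^{falling k} * log2(n) for some absolute constant C (for all n >= 2). -/

import Mathlib

/-- Last `k` entries of a list. -/
def lastN {α} (k : ℕ) (l : List α) : List α := l.drop (l.length - k)

/-- Generic empirical entropy in per-node form: for each node `e` of `D` we add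
`log2 (#{e' | cond e' = cond e} / #{e' | cond e' = cond e ∧ val e' = val e})`.
Grouping nodes by the pair `(cond, val)` recovers the usual form
`∑_z ∑_w m_{z,w} log2 (m_z / m_{z,w})`. -/
noncomputable def entropySum {α β γ : Type*} [DecidableEq β] [DecidableEq γ]
    (D : List α) (cond : α → β) (val : α → γ) : ℝ :=
  (D.map (fun e => Real.logb 2
    ((D.countP (fun e' => decide (cond e' = cond e)) : ℝ) /
     (D.countP (fun e' => decide (cond e' = cond e ∧ val e' = val e)) : ℝ)))).sum

/-- `k`-label-history given the list of ancestor labels (padded with `box`). -/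
def kLabHist {σ} (box : σ) (k : ℕ) (h : List σ) : List σ :=
  lastN k (List.replicate k box ++ h)
-- Unranked ordered labeled trees and forests.
mutual
inductive UTree (σ : Type) where
  | node (a : σ) (children : UForest σ) : UTree σ
inductive UForest (σ : Type) where
  | nil : UForest σ
  | cons (t : UTree σ) (f : UForest σ) : UForest σ
end

/-- Number of trees in a forest. -/
def UForest.len {σ} : UForest σ → ℕ
  | .nil => 0
  | .cons _ f => 1 + f.len

mutual
/-- List of (label-history, label, degree) triples, one per node. -/
def udata {σ} (hist : List σ) : UTree σ → List (List σ × σ × ℕ)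
  | .node a f => (hist, a, f.len) :: fudata (hist ++ [a]) f
/-- Node data of a forest of subtrees rooted at label-history `hist`. -/
def fudata {σ} (hist : List σ) : UForest σ → List (List σ × σ × ℕ)
  | .nil => []
  | .cons t f => udata hist t ++ fudata hist f
end

/-- Number of nodes of an unranked tree. -/
def sizeU {σ} (t : UTree σ) : ℕ := (udata [] t).length
/-- `k`-th order label entropy `H^ℓ_k` of an unranked tree. -/
noncomputable def HlU {σ} [DecidableEq σ] (box : σ) (k : ℕ) (t : UTree σ) : ℝ :=
  entropySum (udata [] t) (fun e => kLabHist box k e.1) (fun e => e.2.1)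

/-- `k`-th order label-degree entropy `H^{ℓ,deg}_k` of an unranked tree. -/
noncomputable def HldU {σ} [DecidableEq σ] (box : σ) (k : ℕ) (t : UTree σ) : ℝ :=
  entropySum (udata [] t) (fun e => (kLabHist box k e.1, e.2.1)) (fun e => e.2.2)

/-- `k`-th order degree-label entropy `H^{deg,ℓ}_k` of an unranked tree. -/
noncomputable def HdlU {σ} [DecidableEq σ] (box : σ) (k : ℕ) (t : UTree σ) : ℝ :=
  entropySum (udata [] t) (fun e => (kLabHist box k e.1, e.2.2)) (fun e => e.2.1)

/-- Degree entropy `H^deg` of an unranked tree: `∑_i n_i log2(|t|/n_i)`. -/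
noncomputable def HdegU {σ} [DecidableEq σ] (t : UTree σ) : ℝ :=
  entropySum (udata [] t) (fun _ => ()) (fun e => e.2.2)

/-- Label alphabet for `t_{n,k}`: a root symbol `a`, symbols `b u` indexed by tuples `u`,
and symbols `c i` indexed by numbers `i`. -/
inductive Lab where
  | a : Lab
  | b (u : List ℕ) : Lab
  | c (i : ℕ) : Lab
deriving DecidableEq

/-- A single leaf node with label `x`. -/
def leafU {σ} (x : σ) : UTree σ := .node x .nil

/-- Concatenation of forests. -/
def appendF {σ} : UForest σ → UForest σ → UForest σ
  | .nil, g => g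
  | .cons t f, g => .cons t (appendF f g)

/-- The forest of leaves `c_{i_1} c_{i_2} ⋯ c_{i_k}` for `u = (i_1, …, i_k)`. -/
def cChildren : List ℕ → UForest Lab
  | [] => .nil
  | i :: is => .cons (leafU (.c i)) (cChildren is)

/-- The forest `(c_{i_1} ⋯ c_{i_k})^n`. -/
def cycleF (u : List ℕ) : ℕ → UForest Lab
  | 0 => .nil
  | n + 1 => appendF (cChildren u) (cycleF u n)

/-- The tree `t_u = b_u((c_{i_1} ⋯ c_{i_k})^n)`. -/
def tU (n : ℕ) (u : List ℕ) : UTree Lab := .node (.b u) (cycleF u n)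

/-- The forest `t_{u_1} t_{u_2} ⋯ t_{u_m}` for a list of tuples. -/
def bForest (n : ℕ) : List (List ℕ) → UForest Lab
  | [] => .nil
  | u :: rest => .cons (tU n u) (bForest n rest)

/-- The tree `t_{n,k} = a(t_{u_1} ⋯ t_{u_m})`, given an enumeration `us` of the
injective `k`-tuples over `{0, …, n-1}`. -/
def tnk (n : ℕ) (us : List (List ℕ)) : UTree Lab := .node .a (bForest n us)

/-- `us` is an enumeration (without repetitions, in arbitrary order) of all injective
`k`-tuples over `{0, …, n-1}`. -/
def IsEnum (n k : ℕ) (us : List (List ℕ)) : Prop :=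
  us.Nodup ∧ ∀ u : List ℕ, u ∈ us ↔ (u.length = k ∧ u.Nodup ∧ ∀ i ∈ u, i < n)

/-! The degree sequence of `t_{n,k}` consists of `L = n^{falling k}` (the root), `L` copies of
`K = k·n` (the nodes `b_u`) and `K·L` zeros (the leaves), so `|t| = 1 + L(K+1) ≤ L(K+2)` with
`K + 2 ≤ n³`. Hence the root contributes at most `log₂ L + log₂ (K+2) = O(L log n)`, each `b_u`
at most `log₂ (|t|/L) ≤ log₂ (K+2)`, and the leaves, which make up almost the whole tree,
together `KL log₂ (1 + (L+1)/(KL)) ≤ (L+1)/ln 2`. -/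

open Real

lemma appendF_len {σ} : ∀ f g : UForest σ, (appendF f g).len = f.len + g.len
  | .nil, g => by simp [appendF, UForest.len]
  | .cons t f, g => by simp only [appendF, UForest.len, appendF_len f g]; omega

lemma fudata_appendF {σ} (h : List σ) : ∀ f g : UForest σ,
    fudata h (appendF f g) = fudata h f ++ fudata h g
  | .nil, g => by simp [appendF, fudata]
  | .cons t f, g => by simp [appendF, fudata, fudata_appendF h f g]

lemma cChildren_len (u : List ℕ) : (cChildren u).len = u.length := by
  induction u with
  | nil => rfl
  | cons i is ih => simp only [cChildren, UForest.len, ih, List.length_cons]; omega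

lemma cycleF_len (u : List ℕ) (n : ℕ) : (cycleF u n).len = n * u.length := by
  induction n with
  | zero => simp [cycleF, UForest.len]
  | succ n ih => rw [cycleF, appendF_len, cChildren_len, ih]; ring

lemma bForest_len (n : ℕ) (us : List (List ℕ)) : (bForest n us).len = us.length := by
  induction us with
  | nil => rfl
  | cons u us ih => simp only [bForest, UForest.len, ih, List.length_cons]; omega

lemma fudata_cChildren (h : List Lab) (u : List ℕ) :
    fudata h (cChildren u) = u.map fun i => (h, Lab.c i, 0) := by
  induction u with
  | nil => rfl
  | cons i is ih => simp [cChildren, fudata, udata, leafU, UForest.len, ih]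

lemma map_deg_fudata_cycleF (h : List Lab) (u : List ℕ) (n : ℕ) :
    (fudata h (cycleF u n)).map (·.2.2) = List.replicate (n * u.length) 0 := by
  induction n with
  | zero => simp [cycleF, fudata]
  | succ n ih =>
    rw [cycleF, fudata_appendF, List.map_append, ih, fudata_cChildren, List.map_map,
      add_mul, one_mul, add_comm, List.replicate_add]
    simp [Function.comp_def, List.map_const']

/-- The preorder degree sequence of a root with `L` children that have `K` leaf children each. -/
def twoLevelDegrees (L K : ℕ) : List ℕ :=
  L :: (List.replicate L (K :: List.replicate K 0)).flatten

lemma map_deg_fudata_bForest (h : List Lab) (n k : ℕ) (us : List (List ℕ))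
    (hlen : ∀ u ∈ us, u.length = k) :
    (fudata h (bForest n us)).map (·.2.2) =
      (List.replicate us.length ((n * k) :: List.replicate (n * k) 0)).flatten := by
  induction us with
  | nil => rfl
  | cons u us ih =>
    rw [bForest, fudata, List.map_append, tU, udata, List.map_cons, map_deg_fudata_cycleF,
      cycleF_len, ih fun v hv => hlen v (List.mem_cons_of_mem u hv), hlen u List.mem_cons_self,
      List.length_cons, List.replicate_succ, List.flatten_cons, List.cons_append]

lemma map_deg_udata_tnk (n k : ℕ) (us : List (List ℕ)) (hlen : ∀ u ∈ us, u.length = k) :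
    (udata [] (tnk n us)).map (·.2.2) = twoLevelDegrees us.length (n * k) := by
  rw [tnk, udata, List.map_cons, map_deg_fudata_bForest _ _ _ _ hlen, bForest_len,
    twoLevelDegrees]

lemma IsEnum.length_eq {n k : ℕ} {us : List (List ℕ)} (h : IsEnum n k us) :
    us.length = n.descFactorial k := by
  obtain ⟨hnd, hmem⟩ := h
  rw [← List.toFinset_card_of_nodup hnd, ← Fintype.card_fin n, ← Fintype.card_fin k,
    ← Fintype.card_embedding_eq, ← Finset.card_univ]
  symm
  apply Finset.card_bij (fun f _ => List.ofFn fun j => (f j : ℕ))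
  · intro f _
    rw [List.mem_toFinset, hmem]
    refine ⟨List.length_ofFn,
      List.nodup_ofFn.mpr fun i j hij => f.injective (Fin.val_injective hij), fun i hi => ?_⟩
    obtain ⟨j, rfl⟩ := List.mem_ofFn.mp hi
    exact (f j).isLt
  · intro f _ g _ hfg
    ext j
    exact congrFun (List.ofFn_injective hfg) j
  · intro u hu
    obtain ⟨rfl, hnd', hlt⟩ := hmem u |>.mp (List.mem_toFinset.mp hu)
    refine ⟨⟨fun i => ⟨u.get i, hlt _ (u.get_mem i)⟩, fun i j hij => ?_⟩, Finset.mem_univ _, ?_⟩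
    · exact List.nodup_iff_injective_get.mp hnd' (Fin.ext_iff.mp hij)
    · simp

noncomputable def listEntropy {α} [DecidableEq α] (l : List α) : ℝ :=
  (l.map fun x => logb 2 (l.length / l.count x)).sum

lemma entropySum_const_cond {α β γ : Type*} [DecidableEq β] [DecidableEq γ]
    (D : List α) (b : β) (val : α → γ) :
    entropySum D (fun _ => b) val = listEntropy (D.map val) := by
  simp only [entropySum, listEntropy, List.map_map, List.length_map, List.count, List.countP_map]
  congr 1
  refine List.map_congr_left fun e _ => ?_
  simp only [decide_true, true_and, List.countP_true, Function.comp_apply]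
  rfl

lemma logb_div_le_logb_div {N c m : ℝ} (hN : 0 ≤ N) (hm : 0 < m) (hmc : m ≤ c) :
    logb 2 (N / c) ≤ logb 2 (N / m) := by
  rcases hN.eq_or_lt with rfl | hN
  · simp
  exact logb_le_logb_of_le one_lt_two (div_pos hN (hm.trans_le hmc))
    (div_le_div_of_nonneg_left hN.le hm hmc)

lemma mul_logb_div_le {N m : ℝ} (hN : 0 < N) (hm : 0 < m) :
    m * logb 2 (N / m) ≤ (N - m) / log 2 := by
  have hlog : log (N / m) ≤ N / m - 1 := log_le_sub_one_of_pos (div_pos hN hm)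
  calc m * logb 2 (N / m) = m * log (N / m) / log 2 := by rw [logb, mul_div_assoc]
    _ ≤ m * (N / m - 1) / log 2 := by gcongr
    _ = (N - m) / log 2 := by field_simp

lemma logb_two_natCast_le (m : ℕ) : logb 2 m ≤ m := by
  rcases m.eq_zero_or_pos with rfl | hm
  · simp
  calc logb 2 m ≤ logb 2 ((2 : ℝ) ^ m) :=
        logb_le_logb_of_le one_lt_two (by positivity) (by exact_mod_cast m.lt_two_pow_self.le)
    _ = m := by rw [logb_pow, logb_self_eq_one one_lt_two, mul_one]

lemma logb_le_mul_logb_of_le_pow {x y : ℝ} {m : ℕ} (hx : 0 < x) (h : x ≤ y ^ m) :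
    logb 2 x ≤ m * logb 2 y :=
  logb_pow 2 y m ▸ logb_le_logb_of_le one_lt_two hx h

section TwoLevelDegrees

variable {L K : ℕ}

lemma length_twoLevelDegrees : (twoLevelDegrees L K).length = 1 + L * (K + 1) := by
  simp only [twoLevelDegrees, List.length_cons, List.length_flatten, List.map_replicate,
    List.length_replicate, List.sum_replicate, smul_eq_mul]
  ring

lemma count_zero_twoLevelDegrees (hL : L ≠ 0) (hK : K ≠ 0) :
    (twoLevelDegrees L K).count 0 = L * K := by
  simp [twoLevelDegrees, List.count_flatten, List.sum_replicate, hL, hK]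

lemma le_count_twoLevelDegrees : L ≤ (twoLevelDegrees L K).count K := by
  simp only [twoLevelDegrees, List.count_cons, List.count_flatten, List.map_replicate,
    List.sum_replicate, smul_eq_mul]
  exact Nat.le_add_right_of_le (Nat.le_mul_of_pos_right L (by simp))

lemma sum_map_twoLevelDegrees (g : ℕ → ℝ) :
    ((twoLevelDegrees L K).map g).sum = g L + L * (g K + K * g 0) := by
  simp only [twoLevelDegrees, List.map_cons, List.map_flatten, List.map_replicate, List.sum_cons,
    List.sum_flatten, List.sum_replicate, nsmul_eq_mul]

lemma listEntropy_twoLevelDegrees_le (hL : L ≠ 0) (hK : K ≠ 0) :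
    listEntropy (twoLevelDegrees L K) ≤
      logb 2 (1 + L * (K + 1)) + L * logb 2 (K + 2) + (L + 1) / log 2 := by
  have hLR : (1 : ℝ) ≤ L := by exact_mod_cast Nat.one_le_iff_ne_zero.mpr hL
  have hKR : (1 : ℝ) ≤ K := by exact_mod_cast Nat.one_le_iff_ne_zero.mpr hK
  set N : ℝ := 1 + L * (K + 1) with hN
  have hN0 : 0 < N := by positivity
  rw [listEntropy, sum_map_twoLevelDegrees, length_twoLevelDegrees]
  push_cast
  rw [← hN]
  have hroot : logb 2 (N / (twoLevelDegrees L K).count L) ≤ logb 2 N := by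
    simpa using logb_div_le_logb_div hN0.le one_pos
      (by exact_mod_cast List.count_pos_iff.mpr List.mem_cons_self)
  have hinner : logb 2 (N / (twoLevelDegrees L K).count K) ≤ logb 2 (K + 2) :=
    calc _ ≤ logb 2 (N / L) :=
          logb_div_le_logb_div hN0.le (by positivity)
            (by exact_mod_cast le_count_twoLevelDegrees)
      _ ≤ logb 2 (K + 2) := by
          gcongr
          · norm_num
          · rw [div_le_iff₀ (by positivity)]; nlinarith
  have hleaves : L * (K * logb 2 (N / (twoLevelDegrees L K).count 0)) ≤ (L + 1) / log 2 := by
    rw [count_zero_twoLevelDegrees hL hK, ← mul_assoc]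
    push_cast
    convert mul_logb_div_le hN0 (by positivity : (0 : ℝ) < L * K) using 2
    ring
  nlinarith

lemma listEntropy_twoLevelDegrees_le_mul_logb {n : ℕ} (hn : 2 ≤ n) (hL : L ≠ 0) (hK : K ≠ 0)
    (hKn : K ≤ n * n) :
    listEntropy (twoLevelDegrees L K) ≤ 11 * L * logb 2 n := by
  refine (listEntropy_twoLevelDegrees_le hL hK).trans ?_
  have hnR : (2 : ℝ) ≤ n := by exact_mod_cast hn
  have hLR : (1 : ℝ) ≤ L := by exact_mod_cast Nat.one_le_iff_ne_zero.mpr hL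
  have hKnR : (K : ℝ) ≤ n * n := by exact_mod_cast hKn
  have hlogn : 1 ≤ logb 2 n := by
    simpa [logb_self_eq_one one_lt_two] using logb_le_logb_of_le (b := 2) one_lt_two two_pos hnR
  have hinner : logb 2 (K + 2) ≤ 3 * logb 2 n := by
    exact_mod_cast logb_le_mul_logb_of_le_pow (by positivity) (by nlinarith : (K : ℝ) + 2 ≤ n ^ 3)
  have hroot : logb 2 (1 + L * (K + 1)) ≤ L + 3 * logb 2 n :=
    calc logb 2 (1 + L * (K + 1)) ≤ logb 2 (L * (K + 2)) :=
          logb_le_logb_of_le one_lt_two (by positivity) (by nlinarith)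
      _ = logb 2 L + logb 2 (K + 2) := logb_mul (by positivity) (by positivity)
      _ ≤ L + 3 * logb 2 n := add_le_add (logb_two_natCast_le L) hinner
  have hleaves : (L + 1) / log 2 ≤ 2 * (L + 1) := by
    rw [div_le_iff₀ (log_pos one_lt_two)]
    nlinarith [log_two_gt_d9]
  nlinarith

end TwoLevelDegrees

/-- For `n ≥ k ≥ 1` and any enumeration `us` of the injective `k`-tuples over `[n]`,
`|t_{n,k}| = 1 + n^{falling k} + k·n·n^{falling k}`; moreover there is an absolute
constant `C > 0` such that for all `n ≥ 2`,
`H^deg(t_{n,k}) ≤ C · n^{falling k} · log2 n`. -/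
theorem tnk_size_and_Hdeg :
    (∀ n k : ℕ, ∀ us : List (List ℕ), 1 ≤ k → k ≤ n → IsEnum n k us →
      sizeU (tnk n us) =
        1 + n.descFactorial k + k * n * n.descFactorial k) ∧
    ∃ C : ℝ, 0 < C ∧ ∀ n k : ℕ, ∀ us : List (List ℕ),
      1 ≤ k → k ≤ n → 2 ≤ n → IsEnum n k us →
      HdegU (tnk n us) ≤ C * (n.descFactorial k : ℝ) * Real.logb 2 n := by
  have degrees_eq {n k us} (h : IsEnum n k us) :
      (udata [] (tnk n us)).map (·.2.2) = twoLevelDegrees (n.descFactorial k) (n * k) := by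
    rw [map_deg_udata_tnk n k us fun u hu => ((h.2 u).mp hu).1, h.length_eq]
  refine ⟨fun n k us _ _ henum => ?_, 11, by norm_num, fun n k us hk hkn hn henum => ?_⟩
  · rw [sizeU, ← List.length_map (f := (·.2.2)), degrees_eq henum, length_twoLevelDegrees]
    ring
  · rw [HdegU, entropySum_const_cond, degrees_eq henum]
    exact listEntropy_twoLevelDegrees_le_mul_logb hn
      (Nat.descFactorial_eq_zero_iff_lt.not.mpr (by omega)) (by positivity)
      (Nat.mul_le_mul_left n hkn)
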